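/- Let S be a field and let X, Y be 2×2 matrices over S with determinants δ = det(X), δ′ = det(Y) and supertraces τ = str(X), τ′ = str(Y), where str(M) := m₁₁ − m₂₂. Then the commutator [X,Y] is not invertible if and only if δ·τ′² + δ′·τ² + tr(XY)·τ′·τ = str(XY)·str(YX). -/
import Mathlib


/-- The supertrace of a 2×2 matrix: `str M = M 0 0 - M 1 1`. -/
def str {S : Type*} [Field S] (M : Matrix (Fin 2) (Fin 2) S) : S :=
  M 0 0 - M 1 1

theorem commutator_not_invertible_iff {S : Type*} [Field S]
    (X Y : Matrix (Fin 2) (Fin 2) S) :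
    ¬ IsUnit (X * Y - Y * X) ↔
      X.det * (str Y) ^ 2 + Y.det * (str X) ^ 2
          + Matrix.trace (X * Y) * str Y * str X = str (X * Y) * str (Y * X) := by
  have key : (X * Y - Y * X).det =
      str (X * Y) * str (Y * X) -
        (X.det * (str Y) ^ 2 + Y.det * (str X) ^ 2
          + Matrix.trace (X * Y) * str Y * str X) := by
    simp only [Matrix.det_fin_two, str, Matrix.trace_fin_two, Matrix.sub_apply,
      Matrix.mul_apply, Fin.sum_univ_two]
    ring
  rw [Matrix.isUnit_iff_isUnit_det, isUnit_iff_ne_zero, not_ne_iff, key, sub_eq_zero, eq_comm]
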